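/- For all n ≥ 4, the number of permutations of {1,...,n} avoiding 132, 2341, and 3241 that have exactly two right-to-left maxima equals p_{n-2} + p_{n-3}, where p_k is the k-th Pell number. -/

import Mathlib

/-- A function `π : Fin n → Fin n` contains the pattern `p : Fin k → ℕ` if there is a
strictly increasing choice of indices whose images under `π` have the same pairwise
order relations as the entries of `p`. -/
def Contains {n k : ℕ} (π : Fin n → Fin n) (p : Fin k → ℕ) : Prop :=
  ∃ f : Fin k → Fin n, StrictMono f ∧ ∀ i j, p i < p j ↔ π (f i) < π (f j)

/-- `π` avoids the pattern `p`. -/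
def Avoids {n k : ℕ} (π : Fin n → Fin n) (p : Fin k → ℕ) : Prop := ¬ Contains π p

/-- The set of permutations of `Fin n` avoiding the patterns 132, 2341 and 3241,
i.e. the 132-avoiding two-stack sortable permutations. -/
def TSS132 (n : ℕ) : Set (Fin n → Fin n) :=
  {π | Function.Bijective π ∧ Avoids π ![1,3,2] ∧ Avoids π ![2,3,4,1] ∧ Avoids π ![3,2,4,1]}

/-- The Pell numbers. -/
def pell : ℕ → ℕ
  | 0 => 0
  | 1 => 1
  | n+2 => 2 * pell (n+1) + pell n

/-!
Write `P_n` for the set in question. In `π ∈ P_n` every entry left of the maximum `n` exceeds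
every entry right of it (132), so, for `n ≥ 3`, avoiding 2341 and 3241 forces `n` to stand last,
first, or second behind `n - 1`. Deleting these entries identifies `P_n` with
`P_{n-1} ⊔ P_{n-1} ⊔ P_{n-2}`, whence `|P_n| = p_n`. Appending the maximum leaves a single
right-to-left maximum, while prepending `n` or `(n-1) n` adds one; so the members of `P_n` with
two right-to-left maxima are `n σ (n-1)` with `σ ∈ P_{n-2}` and `(n-1) n σ (n-2)` with
`σ ∈ P_{n-3}`.
-/

section Patterns

variable {N m k : ℕ} {π : Fin N → Fin N} {C : Fin m → Fin m} {p : Fin k → ℕ}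

theorem contains_of_embedding (ρ : Fin m → Fin N) (hρ : StrictMono ρ)
    (hval : ∀ i j, π (ρ i) < π (ρ j) ↔ C i < C j) (h : Contains C p) : Contains π p := by
  obtain ⟨f, hf, hfp⟩ := h
  exact ⟨ρ ∘ f, hρ.comp hf, fun i j => (hfp i j).trans (hval _ _).symm⟩

theorem contains_of_embedding_of_mem_range (ρ : Fin m → Fin N) (hρ : StrictMono ρ)
    (hval : ∀ i j, π (ρ i) < π (ρ j) ↔ C i < C j) (f : Fin k → Fin N) (hf : StrictMono f)
    (hfp : ∀ i j, p i < p j ↔ π (f i) < π (f j)) (hrange : ∀ t, f t ∈ Set.range ρ) :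
    Contains C p := by
  choose g hg using hrange
  refine ⟨g, fun i j hij => hρ.lt_iff_lt.mp ?_, fun i j => ?_⟩
  · simpa only [hg] using hf hij
  · rw [hfp, ← hg i, ← hg j, hval]

theorem contains_132 {a b c : Fin N} (hab : a < b) (hbc : b < c) (hac : π a < π c)
    (hcb : π c < π b) : Contains π ![1, 3, 2] := by
  refine ⟨![a, b, c], ?_, fun i j => ?_⟩
  · simp [Fin.strictMono_iff_lt_succ, Fin.forall_fin_succ, hab, hbc]
  · simp only [Fin.lt_def] at *
    fin_cases i <;> fin_cases j <;> simp <;> omega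

theorem contains_2341 {a b c d : Fin N} (hab : a < b) (hbc : b < c) (hcd : c < d)
    (hda : π d < π a) (hab' : π a < π b) (hbc' : π b < π c) : Contains π ![2, 3, 4, 1] := by
  refine ⟨![a, b, c, d], ?_, fun i j => ?_⟩
  · simp [Fin.strictMono_iff_lt_succ, Fin.forall_fin_succ, hab, hbc, hcd]
  · simp only [Fin.lt_def] at *
    fin_cases i <;> fin_cases j <;> simp <;> omega

theorem contains_3241 {a b c d : Fin N} (hab : a < b) (hbc : b < c) (hcd : c < d)
    (hdb : π d < π b) (hba : π b < π a) (hac : π a < π c) : Contains π ![3, 2, 4, 1] := by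
  refine ⟨![a, b, c, d], ?_, fun i j => ?_⟩
  · simp [Fin.strictMono_iff_lt_succ, Fin.forall_fin_succ, hab, hbc, hcd]
  · simp only [Fin.lt_def] at *
    fin_cases i <;> fin_cases j <;> simp <;> omega

theorem not_contains_of_lt (h : N < k) : ¬ Contains π p :=
  fun ⟨f, hf, _⟩ => h.not_ge (Fin.le_of_injective f hf.injective)

end Patterns

section Constructions

variable {m k : ℕ}

def appendMax (C : Fin m → Fin m) : Fin (m + 1) → Fin (m + 1) :=
  Fin.snoc (Fin.castSucc ∘ C) (Fin.last m)

def prependMax (C : Fin m → Fin m) : Fin (m + 1) → Fin (m + 1) :=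
  Fin.cons (Fin.last m) (Fin.castSucc ∘ C)

def prependTwoMax (C : Fin m → Fin m) : Fin (m + 2) → Fin (m + 2) :=
  Fin.cons (Fin.last m).castSucc (Fin.cons (Fin.last (m + 1)) (Fin.castSucc ∘ Fin.castSucc ∘ C))

variable (C : Fin m → Fin m)

@[simp] theorem appendMax_castSucc (i : Fin m) : appendMax C i.castSucc = (C i).castSucc := by
  simp [appendMax]

@[simp] theorem appendMax_last : appendMax C (Fin.last m) = Fin.last m := by
  simp [appendMax]

@[simp] theorem prependMax_zero : prependMax C 0 = Fin.last m := rfl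

@[simp] theorem prependMax_succ (i : Fin m) : prependMax C i.succ = (C i).castSucc := rfl

@[simp] theorem prependTwoMax_zero : prependTwoMax C 0 = (Fin.last m).castSucc := rfl

@[simp] theorem prependTwoMax_one : prependTwoMax C 1 = Fin.last (m + 1) := rfl

@[simp] theorem prependTwoMax_succ_succ (i : Fin m) :
    prependTwoMax C i.succ.succ = (C i).castSucc.castSucc := rfl

theorem appendMax_injective : (appendMax : (Fin m → Fin m) → _).Injective := fun _ _ h =>
  (Fin.castSucc_injective m).comp_left (Fin.snoc_injective2 h).1

theorem prependMax_injective : (prependMax : (Fin m → Fin m) → _).Injective := fun _ _ h =>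
  (Fin.castSucc_injective m).comp_left (Fin.cons_right_injective _ h)

theorem prependTwoMax_injective : (prependTwoMax : (Fin m → Fin m) → _).Injective :=
  fun _ _ h => ((Fin.castSucc_injective _).comp (Fin.castSucc_injective m)).comp_left
    (Fin.cons_right_injective _ (Fin.cons_right_injective _ h))

theorem appendMax_eq_last_iff (i : Fin (m + 1)) :
    appendMax C i = Fin.last m ↔ i = Fin.last m := by
  induction i using Fin.lastCases <;> simp [Fin.castSucc_ne_last]

variable {C}

theorem bijective_appendMax_iff : (appendMax C).Bijective ↔ C.Bijective := by
  rw [← Finite.injective_iff_bijective, ← Finite.injective_iff_bijective, appendMax,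
    Fin.snoc_injective_iff, (Fin.castSucc_injective m).of_comp_iff]
  simp [Fin.castSucc_ne_last]

theorem bijective_prependMax_iff : (prependMax C).Bijective ↔ C.Bijective := by
  rw [← Finite.injective_iff_bijective, ← Finite.injective_iff_bijective, prependMax,
    Fin.cons_injective_iff, (Fin.castSucc_injective m).of_comp_iff]
  simp [Fin.castSucc_ne_last]

theorem bijective_prependTwoMax_iff : (prependTwoMax C).Bijective ↔ C.Bijective := by
  rw [← Finite.injective_iff_bijective, ← Finite.injective_iff_bijective, prependTwoMax,
    Fin.cons_injective_iff, Fin.cons_injective_iff, (Fin.castSucc_injective _).of_comp_iff,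
    (Fin.castSucc_injective m).of_comp_iff]
  simp [Fin.castSucc_ne_last]

theorem contains_appendMax_iff {p : Fin (k + 1) → ℕ} {j : Fin (k + 1)}
    (hp : p (Fin.last k) < p j) : Contains (appendMax C) p ↔ Contains C p := by
  have hval : ∀ i i', appendMax C i.castSucc < appendMax C i'.castSucc ↔ C i < C i' := by simp
  refine ⟨fun ⟨f, hf, hfp⟩ => ?_, contains_of_embedding _ Fin.strictMono_castSucc hval⟩
  refine contains_of_embedding_of_mem_range _ Fin.strictMono_castSucc hval f hf hfp fun t => ?_
  have hlast : f (Fin.last k) < Fin.last m := by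
    refine Fin.lt_last_iff_ne_last.mpr fun h => ?_
    have := (hfp _ j).mp hp
    rw [h, appendMax_last] at this
    exact (Fin.le_last _).not_gt this
  exact Fin.exists_castSucc_eq.mpr ((hf.monotone (Fin.le_last t)).trans_lt hlast).ne

theorem contains_prependMax_iff {p : Fin (k + 1) → ℕ} {j : Fin (k + 1)}
    (hp : p 0 < p j) : Contains (prependMax C) p ↔ Contains C p := by
  have hval : ∀ i i', prependMax C i.succ < prependMax C i'.succ ↔ C i < C i' := by simp
  refine ⟨fun ⟨f, hf, hfp⟩ => ?_, contains_of_embedding _ Fin.strictMono_succ hval⟩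
  refine contains_of_embedding_of_mem_range _ Fin.strictMono_succ hval f hf hfp fun t => ?_
  have hzero : 0 < f 0 := by
    refine Fin.pos_iff_ne_zero.mpr fun h => ?_
    have := (hfp 0 j).mp hp
    rw [h, prependMax_zero] at this
    exact (Fin.le_last _).not_gt this
  exact Fin.exists_succ_eq.mpr (hzero.trans_le (hf.monotone (Fin.zero_le t))).ne'

theorem mem_range_succ_succ {x : Fin (m + 2)} (hx : 2 ≤ (x : ℕ)) :
    x ∈ Set.range (Fin.succ ∘ Fin.succ) :=
  ⟨⟨x - 2, by omega⟩, Fin.ext (by simp; omega)⟩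

theorem contains_prependTwoMax_iff {p : Fin (k + 3) → ℕ}
    (hp : p 0 < p 2) : Contains (prependTwoMax C) p ↔ Contains C p := by
  have hρ : StrictMono (Fin.succ ∘ Fin.succ : Fin m → Fin (m + 2)) :=
    Fin.strictMono_succ.comp Fin.strictMono_succ
  have hval : ∀ i i', prependTwoMax C (i.succ.succ) < prependTwoMax C i'.succ.succ ↔
      C i < C i' := by simp
  refine ⟨fun ⟨f, hf, hfp⟩ => ?_, contains_of_embedding _ hρ hval⟩
  refine contains_of_embedding_of_mem_range _ hρ hval f hf hfp fun t => ?_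
  -- `f 2` is an old position, so its value, and hence the one at `f 0`, is below both new ones.
  have h01 : f 0 < f 1 := hf (by simp)
  have h12 : f 1 < f 2 := hf (by simp [Fin.lt_def, Nat.mod_eq_of_lt])
  obtain ⟨b, hb⟩ := mem_range_succ_succ (x := f 2) (by simp only [Fin.lt_def] at h01 h12; omega)
  have hlt : prependTwoMax C (f 0) < (Fin.last m).castSucc := by
    refine ((hfp 0 2).mp hp).trans ?_
    rw [← hb, Function.comp_apply, prependTwoMax_succ_succ, Fin.castSucc_lt_castSucc_iff]
    exact Fin.castSucc_lt_last _
  have h0 : 2 ≤ (f 0 : ℕ) := by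
    by_contra! h
    obtain h | h : f 0 = 0 ∨ f 0 = 1 := by
      simp only [Fin.ext_iff, Fin.val_zero, Fin.val_one]; omega
    · rw [h, prependTwoMax_zero] at hlt; exact hlt.false
    · rw [h, prependTwoMax_one] at hlt; exact (Fin.castSucc_lt_last _).not_gt hlt
  exact mem_range_succ_succ (h0.trans (hf.monotone (Fin.zero_le t)))

theorem appendMax_mem_TSS132_iff : appendMax C ∈ TSS132 (m + 1) ↔ C ∈ TSS132 m := by
  simp only [TSS132, Set.mem_ofPred_eq, Avoids, bijective_appendMax_iff,
    contains_appendMax_iff (p := ![1, 3, 2]) (j := 1) (by decide),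
    contains_appendMax_iff (p := ![2, 3, 4, 1]) (j := 0) (by decide),
    contains_appendMax_iff (p := ![3, 2, 4, 1]) (j := 0) (by decide)]

theorem prependMax_mem_TSS132_iff : prependMax C ∈ TSS132 (m + 1) ↔ C ∈ TSS132 m := by
  simp only [TSS132, Set.mem_ofPred_eq, Avoids, bijective_prependMax_iff,
    contains_prependMax_iff (p := ![1, 3, 2]) (j := 1) (by decide),
    contains_prependMax_iff (p := ![2, 3, 4, 1]) (j := 1) (by decide),
    contains_prependMax_iff (p := ![3, 2, 4, 1]) (j := 2) (by decide)]

theorem prependTwoMax_mem_TSS132_iff : prependTwoMax C ∈ TSS132 (m + 2) ↔ C ∈ TSS132 m := by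
  simp only [TSS132, Set.mem_ofPred_eq, Avoids, bijective_prependTwoMax_iff,
    contains_prependTwoMax_iff (p := ![1, 3, 2]) (by decide),
    contains_prependTwoMax_iff (p := ![2, 3, 4, 1]) (by decide),
    contains_prependTwoMax_iff (p := ![3, 2, 4, 1]) (by decide)]

end Constructions

section Decomposition

theorem right_lt_left_of_avoids_132 {n : ℕ} {π : Fin (n + 1) → Fin (n + 1)}
    (h132 : Avoids π ![1, 3, 2]) (hπ : π.Injective) {i k l : Fin (n + 1)}
    (hk : π k = Fin.last n) (hik : i < k) (hkl : k < l) : π l < π i := by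
  by_contra! hil
  have hil' : π i < π l := hil.lt_of_ne (hπ.ne (hik.trans hkl).ne)
  have hlk : π l < π k := hk ▸ (Fin.le_last _).lt_of_ne (hk ▸ hπ.ne hkl.ne')
  exact h132 (contains_132 hik hkl hil' hlk)

theorem max_position_of_mem_TSS132 {m : ℕ} {π : Fin (m + 3) → Fin (m + 3)}
    (hπ : π ∈ TSS132 (m + 3)) :
    π (Fin.last _) = Fin.last _ ∨ π 0 = Fin.last _ ∨
      (π 0 = (Fin.last _).castSucc ∧ π 1 = Fin.last _) := by
  obtain ⟨hbij, h132, h2341, h3241⟩ := hπ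
  obtain ⟨k, hk⟩ := hbij.2 (Fin.last (m + 2))
  have hmax : ∀ i, i ≠ k → π i < π k := fun i hi =>
    hk ▸ Fin.lt_last_iff_ne_last.mpr (hk ▸ hbij.1.ne hi)
  obtain rfl | rfl | h1k : k = 0 ∨ k = 1 ∨ 1 < k := by
    rcases k with ⟨_ | _ | k, _⟩ <;> simp [Fin.lt_def]
  · exact .inr (.inl hk)
  · refine .inr (.inr ⟨?_, hk⟩)
    obtain ⟨t, ht⟩ := hbij.2 (Fin.last (m + 1)).castSucc
    obtain rfl | rfl | h1t : t = 0 ∨ t = 1 ∨ 1 < t := by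
      rcases t with ⟨_ | _ | t, _⟩ <;> simp [Fin.lt_def]
    · exact ht
    · exact absurd (ht.symm.trans hk) (Fin.castSucc_lt_last _).ne
    · have h0t := right_lt_left_of_avoids_132 h132 hbij.1 hk Fin.zero_lt_one h1t
      have h0k := hmax 0 Fin.zero_ne_one
      rw [ht] at h0t
      rw [hk] at h0k
      simp only [Fin.lt_def, Fin.val_castSucc, Fin.val_last] at h0t h0k
      omega
  obtain hkl | rfl := (Fin.le_last k).lt_or_eq
  · have h0k : 0 < k := Fin.zero_lt_one.trans h1k
    have hd0 := right_lt_left_of_avoids_132 h132 hbij.1 hk h0k hkl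
    have hd1 := right_lt_left_of_avoids_132 h132 hbij.1 hk h1k hkl
    obtain h01 | h10 := (hbij.1.ne Fin.zero_ne_one).lt_or_gt
    · exact (h2341 (contains_2341 Fin.zero_lt_one h1k hkl hd0 h01 (hmax 1 h1k.ne))).elim
    · exact (h3241 (contains_3241 Fin.zero_lt_one h1k hkl hd1 h10 (hmax 0 h0k.ne))).elim
  · exact .inl hk

variable {m : ℕ}

theorem exists_castSucc_comp_eq {α : Type*} {g : α → Fin (m + 1)}
    (hg : ∀ x, g x ≠ Fin.last m) : ∃ C : α → Fin m, Fin.castSucc ∘ C = g :=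
  ⟨fun x => (g x).castPred (hg x), funext fun _ => Fin.castSucc_castPred _ _⟩

theorem exists_appendMax_eq {π : Fin (m + 1) → Fin (m + 1)} (hπ : π.Injective)
    (hlast : π (Fin.last m) = Fin.last m) : ∃ C, appendMax C = π := by
  obtain ⟨C, hC⟩ := exists_castSucc_comp_eq (g := Fin.init π) fun i h =>
    (Fin.castSucc_lt_last i).ne (hπ (h.trans hlast.symm))
  exact ⟨C, by rw [appendMax, hC, ← hlast, Fin.snoc_init_self]⟩

theorem exists_prependMax_eq {π : Fin (m + 1) → Fin (m + 1)} (hπ : π.Injective)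
    (h0 : π 0 = Fin.last m) : ∃ C, prependMax C = π := by
  obtain ⟨C, hC⟩ := exists_castSucc_comp_eq (g := Fin.tail π) fun i h =>
    (Fin.succ_ne_zero i) (hπ (h.trans h0.symm))
  exact ⟨C, by rw [prependMax, hC, ← h0, Fin.cons_self_tail]⟩

theorem exists_prependTwoMax_eq {π : Fin (m + 2) → Fin (m + 2)} (hπ : π.Injective)
    (h0 : π 0 = (Fin.last m).castSucc) (h1 : π 1 = Fin.last (m + 1)) :
    ∃ C, prependTwoMax C = π := by
  obtain ⟨g, hg⟩ := exists_castSucc_comp_eq (g := Fin.tail (Fin.tail π)) fun i h =>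
    (Fin.succ_ne_zero i) (Fin.succ_injective _ (hπ (h.trans h1.symm)))
  obtain ⟨C, hC⟩ := exists_castSucc_comp_eq fun i (h : g i = _) => by
    have := congrFun hg i
    simp only [Function.comp_apply, h, Fin.tail] at this
    exact Fin.succ_ne_zero _ (hπ (this.symm.trans h0.symm))
  refine ⟨C, ?_⟩
  rw [prependTwoMax, hC, hg, ← h0, ← h1]
  exact (congrArg _ (Fin.cons_self_tail (Fin.tail π))).trans (Fin.cons_self_tail π)

end Decomposition

section RightToLeftMaxima

variable {α : Type*} [LinearOrder α] {n : ℕ}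

def rlMaxCount (π : Fin n → α) : ℕ :=
  (Finset.univ.filter fun i => ∀ j, i < j → π j < π i).card

theorem nat_card_rlMaxima_eq_rlMaxCount (π : Fin n → α) :
    Nat.card {i : Fin n // ∀ j, i < j → π j < π i} = rlMaxCount π := by
  rw [Nat.card_eq_fintype_card, Fintype.card_subtype, rlMaxCount]

theorem rlMaxCount_comp {β : Type*} [LinearOrder β] {σ : α → β} (hσ : StrictMono σ)
    (g : Fin n → α) : rlMaxCount (σ ∘ g) = rlMaxCount g := by
  simp [rlMaxCount, hσ.lt_iff_lt]

theorem rlMaxCount_cons (a : α) (g : Fin n → α) :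
    rlMaxCount (Fin.cons a g : Fin (n + 1) → α) =
      rlMaxCount g + if ∀ i, g i < a then 1 else 0 := by
  rw [rlMaxCount, rlMaxCount, Finset.card_filter, Finset.card_filter, Fin.sum_univ_succ, add_comm]
  simp [Fin.forall_fin_succ]

theorem rlMaxCount_snoc {a : α} {g : Fin n → α} (hg : ∀ i, g i < a) :
    rlMaxCount (Fin.snoc g a : Fin (n + 1) → α) = 1 := by
  rw [rlMaxCount, Finset.card_filter, Fin.sum_univ_castSucc]
  simpa [Fin.forall_fin_succ', hg] using fun i _ => (hg i).le

variable {m : ℕ}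

@[simp] theorem rlMaxCount_appendMax (C : Fin m → Fin m) : rlMaxCount (appendMax C) = 1 :=
  rlMaxCount_snoc fun i => Fin.castSucc_lt_last (C i)

@[simp] theorem rlMaxCount_prependMax (C : Fin m → Fin m) :
    rlMaxCount (prependMax C) = rlMaxCount C + 1 := by
  simp [prependMax, rlMaxCount_cons, rlMaxCount_comp Fin.strictMono_castSucc,
    Fin.castSucc_lt_last]

@[simp] theorem rlMaxCount_prependTwoMax (C : Fin m → Fin m) :
    rlMaxCount (prependTwoMax C) = rlMaxCount C + 1 := by
  have hσ : StrictMono (Fin.castSucc ∘ Fin.castSucc : Fin m → Fin (m + 2)) :=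
    Fin.strictMono_castSucc.comp Fin.strictMono_castSucc
  simp [prependTwoMax, rlMaxCount_cons, ← Function.comp_assoc, rlMaxCount_comp hσ,
    Fin.forall_fin_succ, Fin.castSucc_lt_last, Fin.le_last]

theorem eq_last_of_rlMaxCount_eq_one {π : Fin (m + 1) → Fin (m + 1)} (hπ : π.Bijective)
    (h : rlMaxCount π = 1) : π (Fin.last m) = Fin.last m := by
  obtain ⟨k, hk⟩ := hπ.2 (Fin.last m)
  obtain rfl | hkl := eq_or_ne k (Fin.last m)
  · exact hk
  refine absurd h (ne_of_gt ?_)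
  calc 1 < ({k, Fin.last m} : Finset _).card := by rw [Finset.card_pair hkl]; omega
    _ ≤ rlMaxCount π := Finset.card_le_card fun i hi => by
      simp only [Finset.mem_insert, Finset.mem_singleton] at hi
      simp only [Finset.mem_filter, Finset.mem_univ, true_and]
      rcases hi with rfl | rfl
      · exact fun j hij => hk ▸ (Fin.le_last _).lt_of_ne (hk ▸ hπ.1.ne hij.ne')
      · exact fun j hj => ((Fin.le_last j).not_gt hj).elim

end RightToLeftMaxima

section Counting

theorem TSS132_add_three (m : ℕ) : TSS132 (m + 3) =
    appendMax '' TSS132 (m + 2) ∪ prependMax '' TSS132 (m + 2) ∪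
      prependTwoMax '' TSS132 (m + 1) := by
  ext π
  refine ⟨fun hπ => ?_, ?_⟩
  · rcases max_position_of_mem_TSS132 hπ with h | h | ⟨h0, h1⟩
    · obtain ⟨C, rfl⟩ := exists_appendMax_eq hπ.1.1 h
      exact .inl (.inl ⟨C, appendMax_mem_TSS132_iff.mp hπ, rfl⟩)
    · obtain ⟨C, rfl⟩ := exists_prependMax_eq hπ.1.1 h
      exact .inl (.inr ⟨C, prependMax_mem_TSS132_iff.mp hπ, rfl⟩)
    · obtain ⟨C, rfl⟩ := exists_prependTwoMax_eq hπ.1.1 h0 h1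
      exact .inr ⟨C, prependTwoMax_mem_TSS132_iff.mp hπ, rfl⟩
  · rintro ((⟨C, hC, rfl⟩ | ⟨C, hC, rfl⟩) | ⟨C, hC, rfl⟩)
    exacts [appendMax_mem_TSS132_iff.mpr hC, prependMax_mem_TSS132_iff.mpr hC,
      prependTwoMax_mem_TSS132_iff.mpr hC]

theorem ncard_TSS132_add_three (m : ℕ) : (TSS132 (m + 3)).ncard =
    2 * (TSS132 (m + 2)).ncard + (TSS132 (m + 1)).ncard := by
  have h12 : Disjoint (appendMax '' TSS132 (m + 2)) (prependMax '' TSS132 (m + 2)) := by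
    rw [Set.disjoint_left]
    rintro _ ⟨C, -, rfl⟩ ⟨D, -, h⟩
    simpa using (appendMax_eq_last_iff C 0).mp (h ▸ prependMax_zero D)
  have h3 : Disjoint (appendMax '' TSS132 (m + 2) ∪ prependMax '' TSS132 (m + 2))
      (prependTwoMax '' TSS132 (m + 1)) := by
    rw [Set.disjoint_left]
    rintro _ (⟨C, -, rfl⟩ | ⟨C, -, rfl⟩) ⟨D, -, h⟩
    · simpa [Fin.ext_iff] using (appendMax_eq_last_iff C 1).mp (h ▸ prependTwoMax_one D)
    · simpa using congrFun h 0
  rw [TSS132_add_three, Set.ncard_union_eq h3, Set.ncard_union_eq h12,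
    Set.ncard_image_of_injective _ appendMax_injective,
    Set.ncard_image_of_injective _ prependMax_injective,
    Set.ncard_image_of_injective _ prependTwoMax_injective]
  ring

theorem TSS132_of_le_two {N : ℕ} (hN : N ≤ 2) : TSS132 N = {π | π.Bijective} := by
  ext π
  simp [TSS132, Avoids, not_contains_of_lt, Nat.lt_of_le_of_lt hN]

theorem ncard_TSS132 : ∀ n, (TSS132 (n + 1)).ncard = pell (n + 1)
  | 0 => by rw [TSS132_of_le_two (by norm_num), Set.ncard_eq_toFinset_card']; decide
  | 1 => by rw [TSS132_of_le_two le_rfl, Set.ncard_eq_toFinset_card']; decide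
  | n + 2 => by rw [ncard_TSS132_add_three, ncard_TSS132 (n + 1), ncard_TSS132 n]; rfl

theorem TSS132_rlMaxCount_eq_two (m : ℕ) : {π ∈ TSS132 (m + 4) | rlMaxCount π = 2} =
    prependMax '' (appendMax '' TSS132 (m + 2)) ∪
      prependTwoMax '' (appendMax '' TSS132 (m + 1)) := by
  ext π
  refine ⟨fun ⟨hπ, h2⟩ => ?_, ?_⟩
  · rw [TSS132_add_three] at hπ
    rcases hπ with (⟨C, -, rfl⟩ | ⟨C, hC, rfl⟩) | ⟨C, hC, rfl⟩
    · simp at h2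
    · obtain ⟨D, rfl⟩ := exists_appendMax_eq hC.1.1
        (eq_last_of_rlMaxCount_eq_one hC.1 (by simpa using h2))
      exact .inl ⟨_, ⟨D, appendMax_mem_TSS132_iff.mp hC, rfl⟩, rfl⟩
    · obtain ⟨D, rfl⟩ := exists_appendMax_eq hC.1.1
        (eq_last_of_rlMaxCount_eq_one hC.1 (by simpa using h2))
      exact .inr ⟨_, ⟨D, appendMax_mem_TSS132_iff.mp hC, rfl⟩, rfl⟩
  · rintro (⟨_, ⟨D, hD, rfl⟩, rfl⟩ | ⟨_, ⟨D, hD, rfl⟩, rfl⟩)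
    · exact ⟨prependMax_mem_TSS132_iff.mpr (appendMax_mem_TSS132_iff.mpr hD), by simp⟩
    · exact ⟨prependTwoMax_mem_TSS132_iff.mpr (appendMax_mem_TSS132_iff.mpr hD), by simp⟩

theorem ncard_TSS132_rlMaxCount_eq_two (m : ℕ) :
    {π ∈ TSS132 (m + 4) | rlMaxCount π = 2}.ncard = pell (m + 2) + pell (m + 1) := by
  have hdisj : Disjoint (prependMax '' (appendMax '' TSS132 (m + 2)))
      (prependTwoMax '' (appendMax '' TSS132 (m + 1))) := by
    rw [Set.disjoint_left]
    rintro _ ⟨C, -, rfl⟩ ⟨D, -, h⟩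
    simpa using congrFun h 0
  rw [TSS132_rlMaxCount_eq_two, Set.ncard_union_eq hdisj,
    Set.ncard_image_of_injective _ prependMax_injective,
    Set.ncard_image_of_injective _ prependTwoMax_injective,
    Set.ncard_image_of_injective _ appendMax_injective,
    Set.ncard_image_of_injective _ appendMax_injective, ncard_TSS132, ncard_TSS132]

end Counting

theorem stmt_17 (n : ℕ) (hn : 4 ≤ n) :
    Nat.card ↥{π ∈ TSS132 n | Nat.card {i : Fin n // ∀ j, i < j → π j < π i} = 2} =
      pell (n-2) + pell (n-3) := by
  obtain ⟨m, rfl⟩ := Nat.exists_eq_add_of_le' hn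
  simp_rw [Nat.card_coe_set_eq, nat_card_rlMaxima_eq_rlMaxCount]
  exact ncard_TSS132_rlMaxCount_eq_two m
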